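/- The map Ψ : R_{>0} × R × C^{n-1} → H, Ψ(x, y, u) = (x + ½u*u + iy, u), is a smooth diffeomorphism onto H = {(w₁,w₂) ∈ C × C^{n-1} : Re w₁ > ½‖w₂‖²} with Jacobian determinant 1 (identifying C × C^{n-1} ≅ R² × R^{2(n-1)}), and Δ'(Ψ(x,y,u), Ψ(x,y,u)) = 2x for all (x,y,u). -/

import Mathlib

open MeasureTheory

noncomputable section

/-- The parametrization `Ψ(x, y, u) = (x + ½u*u + iy, u)` of the generalized
right half plane. -/
def psiMap (m : ℕ) (p : ℝ × ℝ × (Fin m → ℂ)) : ℂ × (Fin m → ℂ) :=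
  ((p.1 : ℂ) + (∑ k, star (p.2.2 k) * p.2.2 k) / 2 + Complex.I * (p.2.1 : ℂ),
    p.2.2)

lemma sum_star_mul (m : ℕ) (u : Fin m → ℂ) :
    (∑ k, star (u k) * u k) = ((∑ k, ‖u k‖ ^ 2 : ℝ) : ℂ) := by
  push_cast
  refine Finset.sum_congr rfl fun k _ => ?_
  rw [RCLike.star_def, RCLike.conj_mul]
  norm_cast

lemma psi_fst (m : ℕ) (p : ℝ × ℝ × (Fin m → ℂ)) :
    (psiMap m p).1 =
      ((p.1 + (∑ k, ‖p.2.2 k‖ ^ 2) / 2 : ℝ) : ℂ) + Complex.I * (p.2.1 : ℂ) := by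
  rw [psiMap, sum_star_mul]; push_cast; ring

lemma psi_re (m : ℕ) (p : ℝ × ℝ × (Fin m → ℂ)) :
    (psiMap m p).1.re = p.1 + (∑ k, ‖p.2.2 k‖ ^ 2) / 2 := by
  simp [psi_fst, ← Complex.ofReal_pow]

lemma psi_im (m : ℕ) (p : ℝ × ℝ × (Fin m → ℂ)) :
    (psiMap m p).1.im = p.2.1 := by
  simp [psi_fst, ← Complex.ofReal_pow]

lemma psi_contDiff (m : ℕ) : ContDiff ℝ (⊤ : ℕ∞) (psiMap m) := by
  have hu : ∀ k : Fin m, ContDiff ℝ (⊤ : ℕ∞) (fun p : ℝ × ℝ × (Fin m → ℂ) => p.2.2 k) :=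
    fun k => contDiff_pi.1 (contDiff_snd.comp contDiff_snd) k
  refine ContDiff.prodMk ?_ (contDiff_snd.comp contDiff_snd)
  refine ContDiff.add (ContDiff.add ?_ ?_) ?_
  · exact Complex.ofRealCLM.contDiff.comp contDiff_fst
  · exact (ContDiff.sum fun k _ =>
      ((Complex.conjCLE.contDiff.comp (hu k)).mul (hu k))).div_const 2
  · exact contDiff_const.mul
      (Complex.ofRealCLM.contDiff.comp (contDiff_fst.comp contDiff_snd))

def invPsi (m : ℕ) (w : ℂ × (Fin m → ℂ)) : ℝ × ℝ × (Fin m → ℂ) :=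
  (w.1.re - (∑ k, ‖w.2 k‖ ^ 2) / 2, w.1.im, w.2)

lemma invPsi_contDiff (m : ℕ) : ContDiff ℝ (⊤ : ℕ∞) (invPsi m) := by
  have hnorm : ∀ k : Fin m, ContDiff ℝ (⊤ : ℕ∞) (fun w : ℂ × (Fin m → ℂ) => ‖w.2 k‖ ^ 2) := by
    intro k
    have hk : ContDiff ℝ (⊤ : ℕ∞) (fun w : ℂ × (Fin m → ℂ) => w.2 k) :=
      contDiff_pi.1 contDiff_snd k
    have : (fun w : ℂ × (Fin m → ℂ) => ‖w.2 k‖ ^ 2) =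
        fun w => (w.2 k).re ^ 2 + (w.2 k).im ^ 2 := by
      funext w
      rw [Complex.sq_norm, Complex.normSq_apply]
      ring
    rw [this]
    exact ((Complex.reCLM.contDiff.comp hk).pow 2).add
      ((Complex.imCLM.contDiff.comp hk).pow 2)
  refine ContDiff.prodMk ?_ (ContDiff.prodMk ?_ contDiff_snd)
  · exact (Complex.reCLM.contDiff.comp contDiff_fst).sub
      ((ContDiff.sum fun k _ => hnorm k).div_const 2)
  · exact Complex.imCLM.contDiff.comp contDiff_fst

lemma invPsi_psi (m : ℕ) (p : ℝ × ℝ × (Fin m → ℂ)) : invPsi m (psiMap m p) = p := by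
  have h2 : (psiMap m p).2 = p.2.2 := rfl
  simp [invPsi, psi_re, psi_im, h2]

lemma psi_invPsi (m : ℕ) (w : ℂ × (Fin m → ℂ)) : psiMap m (invPsi m w) = w := by
  have h2 : ∀ p, (psiMap m p).2 = p.2.2 := fun _ => rfl
  refine Prod.ext (Complex.ext ?_ ?_) rfl
  · rw [psi_re]; simp [invPsi]
  · rw [psi_im]; simp [invPsi]

lemma psi_volume_preserving (m : ℕ) :
    MeasurePreserving (psiMap m) (volume : Measure (ℝ × ℝ × (Fin m → ℂ))) volume := by
  set c : (Fin m → ℂ) → ℂ := fun u => ((∑ k, ‖u k‖ ^ 2 : ℝ) : ℂ) / 2 with hc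
  have e1 : MeasurePreserving (MeasurableEquiv.prodAssoc.symm :
      ℝ × ℝ × (Fin m → ℂ) ≃ᵐ (ℝ × ℝ) × (Fin m → ℂ)) volume volume :=
    (volume_preserving_prodAssoc).symm _
  have e2 : MeasurePreserving
      (Prod.map (Complex.measurableEquivRealProd.symm) (id : (Fin m → ℂ) → (Fin m → ℂ)))
      (volume : Measure ((ℝ × ℝ) × (Fin m → ℂ))) volume :=
    (Complex.volume_preserving_equiv_real_prod.symm _).prod (MeasurePreserving.id _)
  have hcm : Measurable c := by
    apply Measurable.div_const
    apply Complex.measurable_ofReal.comp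
    exact Finset.measurable_sum _ fun k _ => ((measurable_pi_apply k).norm).pow_const 2
  have skew : MeasurePreserving
      (fun q : (Fin m → ℂ) × ℂ => (q.1, q.2 + c q.1))
      (volume : Measure ((Fin m → ℂ) × ℂ)) volume := by
    rw [Measure.volume_eq_prod]
    exact MeasurePreserving.skew_product (g := fun u z => z + c u)
      (MeasurePreserving.id volume)
      (show Measurable (Function.uncurry fun (u : Fin m → ℂ) (z : ℂ) => z + c u) from
        measurable_snd.add (hcm.comp measurable_fst))
      (Filter.Eventually.of_forall fun u =>
        (measurePreserving_add_right volume (c u)).map_eq)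
  have shear : MeasurePreserving
      (fun q : ℂ × (Fin m → ℂ) => (q.1 + c q.2, q.2))
      (volume : Measure (ℂ × (Fin m → ℂ))) volume := by
    have heq : (fun q : ℂ × (Fin m → ℂ) => (q.1 + c q.2, q.2)) =
        Prod.swap ∘ (fun q : (Fin m → ℂ) × ℂ => (q.1, q.2 + c q.1)) ∘ Prod.swap := rfl
    rw [heq]
    exact (Measure.measurePreserving_swap.comp skew).comp Measure.measurePreserving_swap
  have hcomp := (shear.comp e2).comp e1
  have : psiMap m = (fun q : ℂ × (Fin m → ℂ) => (q.1 + c q.2, q.2)) ∘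
      (Prod.map (Complex.measurableEquivRealProd.symm) id) ∘
      (MeasurableEquiv.prodAssoc.symm : ℝ × ℝ × (Fin m → ℂ) ≃ᵐ (ℝ × ℝ) × (Fin m → ℂ)) := by
    funext p
    refine Prod.ext (Complex.ext ?_ ?_) rfl <;>
      simp [psi_re, psi_im, hc, ← Complex.ofReal_pow, MeasurableEquiv.prodAssoc,
        Complex.measurableEquivRealProd, Complex.equivRealProd, Prod.map, Complex.div_re,
        Complex.div_im, Complex.normSq]
  rw [this]
  exact hcomp

/-- `Ψ : ℝ_{>0} × ℝ × ℂ^{n-1} → H`, `Ψ(x,y,u) = (x + ½u*u + iy, u)`, is a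
smooth diffeomorphism onto `H = {Re w₁ > ½‖w₂‖²}` with Jacobian determinant
`1` (it preserves Lebesgue measure), and `Δ'(Ψ(x,y,u), Ψ(x,y,u)) = 2x`. -/
theorem stmt_16 (m : ℕ)
    (H : Set (ℂ × (Fin m → ℂ)))
    (hH : H = {w | w.1.re > (∑ k, ‖w.2 k‖ ^ 2) / 2}) :
    Set.BijOn (psiMap m) (Set.Ioi (0 : ℝ) ×ˢ (Set.univ : Set (ℝ × (Fin m → ℂ)))) H ∧
    ContDiff ℝ (⊤ : ℕ∞) (psiMap m) ∧
    (∃ g : ℂ × (Fin m → ℂ) → ℝ × ℝ × (Fin m → ℂ),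
      Set.BijOn g H (Set.Ioi (0 : ℝ) ×ˢ (Set.univ : Set (ℝ × (Fin m → ℂ)))) ∧
      ContDiffOn ℝ (⊤ : ℕ∞) g H ∧
      (∀ p ∈ Set.Ioi (0 : ℝ) ×ˢ (Set.univ : Set (ℝ × (Fin m → ℂ))),
        g (psiMap m p) = p) ∧
      (∀ w ∈ H, psiMap m (g w) = w)) ∧
    MeasurePreserving (psiMap m)
      (volume.restrict (Set.Ioi (0 : ℝ) ×ˢ (Set.univ : Set (ℝ × (Fin m → ℂ)))))
      (volume.restrict H) ∧
    (∀ p : ℝ × ℝ × (Fin m → ℂ),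
      2 * (psiMap m p).1.re - ∑ k, ‖(psiMap m p).2 k‖ ^ 2 = 2 * p.1) := by
  set S : Set (ℝ × ℝ × (Fin m → ℂ)) := Set.Ioi (0 : ℝ) ×ˢ Set.univ with hS
  have hmem : ∀ p : ℝ × ℝ × (Fin m → ℂ), p ∈ S ↔ 0 < p.1 := by
    intro p; simp [hS, Set.mem_prod]
  have hmemH : ∀ p : ℝ × ℝ × (Fin m → ℂ), psiMap m p ∈ H ↔ 0 < p.1 := by
    intro p
    have h2 : (psiMap m p).2 = p.2.2 := rfl
    rw [hH]
    simp only [Set.mem_setOf_eq, psi_re, h2, gt_iff_lt]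
    constructor <;> intro h <;> linarith
  have hginS : ∀ w ∈ H, invPsi m w ∈ S := by
    intro w hw
    rw [hH] at hw
    simp only [Set.mem_setOf_eq, gt_iff_lt] at hw
    rw [hmem]
    simp only [invPsi]
    exact sub_pos.2 hw
  have hbij : Set.BijOn (psiMap m) S H := by
    refine ⟨fun p hp => (hmemH p).2 ((hmem p).1 hp), fun p _ q _ hpq => ?_, fun w hw => ?_⟩
    · have := congrArg (invPsi m) hpq
      rwa [invPsi_psi, invPsi_psi] at this
    · exact ⟨invPsi m w, hginS w hw, psi_invPsi m w⟩
  have himg : psiMap m '' S = H := hbij.image_eq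
  refine ⟨hbij, psi_contDiff m, ?_, ?_, ?_⟩
  · refine ⟨invPsi m, ?_, (invPsi_contDiff m).contDiffOn, fun p _ => invPsi_psi m p,
      fun w hw => psi_invPsi m w⟩
    refine ⟨hginS, fun w hw v hv hwv => ?_, fun p hp => ?_⟩
    · have := congrArg (psiMap m) hwv
      rwa [psi_invPsi, psi_invPsi] at this
    · exact ⟨psiMap m p, (hmemH p).2 ((hmem p).1 hp), invPsi_psi m p⟩
  · have hemb : MeasurableEmbedding (psiMap m) :=
      (psi_volume_preserving m).measurable.measurableEmbedding
        (Function.LeftInverse.injective (invPsi_psi m))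
    have := (psi_volume_preserving m).restrict_image_emb hemb S
    rwa [himg] at this
  · intro p
    have h2 : (psiMap m p).2 = p.2.2 := rfl
    rw [psi_re, h2]; ring

end
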